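/- Let $l > 0$, $\lambda \in \mathbb{R}$, and let $\xi : (0,\infty) \to \mathbb{R}$ be twice continuously differentiable. Define $\eta(z) = \xi(l\sqrt{z})$ for $z > 0$. Then $\xi$ satisfies $\xi''(r) + \frac{5r^4 + 9l^2 r^2 + 3l^4}{r\,(r^4 + 3l^2 r^2 + 3l^4)}\,\xi'(r) = -\frac{\lambda}{16 l^6}\cdot\frac{\xi(r)}{r^4 + 3l^2 r^2 + 3l^4}$ for all $r > 0$ if and only if $\eta$ satisfies $z(z^2+3z+3)\,\eta''(z) + 3(z+1)^2\,\eta'(z) = -\frac{\lambda}{64 l^8}\,\eta(z)$ for all $z > 0$. -/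

import Mathlib

open Set Real

private lemma aux_d1 (l : ℝ) (hl : 0 < l) (ξ : ℝ → ℝ) (hξ : ContDiffOn ℝ 2 ξ (Ioi 0))
    (z : ℝ) (hz : 0 < z) :
    deriv (fun t => ξ (l * Real.sqrt t)) z
      = deriv ξ (l * Real.sqrt z) * (l * (1 / (2 * Real.sqrt z))) := by
  have hs : 0 < Real.sqrt z := Real.sqrt_pos.2 hz
  have hls : 0 < l * Real.sqrt z := by positivity
  have hξ1 : DifferentiableAt ℝ ξ (l * Real.sqrt z) :=
    (hξ.differentiableOn (by norm_num)).differentiableAt (isOpen_Ioi.mem_nhds hls)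
  have hg : HasDerivAt (fun t => l * Real.sqrt t) (l * (1 / (2 * Real.sqrt z))) z :=
    (Real.hasDerivAt_sqrt hz.ne').const_mul l
  exact (hξ1.hasDerivAt.comp z hg).deriv

private lemma aux_d2 (l : ℝ) (hl : 0 < l) (ξ : ℝ → ℝ) (hξ : ContDiffOn ℝ 2 ξ (Ioi 0))
    (z : ℝ) (hz : 0 < z) :
    deriv (deriv (fun t => ξ (l * Real.sqrt t))) z
      = deriv (deriv ξ) (l * Real.sqrt z) * (l^2 / (4*z))
        - deriv ξ (l * Real.sqrt z) * (l / (4 * z * Real.sqrt z)) := by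
  have hs : 0 < Real.sqrt z := Real.sqrt_pos.2 hz
  have hξ2 := hξ.deriv_of_isOpen isOpen_Ioi (m := 1) (by norm_num)
  have hG : deriv (fun t => ξ (l * Real.sqrt t)) =ᶠ[nhds z]
      (fun t => deriv ξ (l * Real.sqrt t) * (l * (1 / (2 * Real.sqrt t)))) := by
    filter_upwards [isOpen_Ioi.mem_nhds hz] with t ht
    exact aux_d1 l hl ξ hξ t ht
  rw [hG.deriv_eq]
  have hls : 0 < l * Real.sqrt z := by positivity
  have hg : HasDerivAt (fun u => l * Real.sqrt u) (l * (1 / (2 * Real.sqrt z))) z :=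
    (Real.hasDerivAt_sqrt hz.ne').const_mul l
  have hd2 : DifferentiableAt ℝ (deriv ξ) (l * Real.sqrt z) :=
    ((hξ2.differentiableOn (by norm_num))).differentiableAt (isOpen_Ioi.mem_nhds hls)
  have hF1 : HasDerivAt (fun t => deriv ξ (l * Real.sqrt t))
      (deriv (deriv ξ) (l * Real.sqrt z) * (l * (1 / (2 * Real.sqrt z)))) z :=
    by have := hd2.hasDerivAt.comp z hg; exact this
  have h2s : HasDerivAt (fun t => 2 * Real.sqrt t) (2 * (1 / (2 * Real.sqrt z))) z :=
    (Real.hasDerivAt_sqrt hz.ne').const_mul 2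
  have hF2 : HasDerivAt (fun t => l * (1 / (2 * Real.sqrt t)))
      (l * ((0 * (2 * Real.sqrt z) - 1 * (2 * (1 / (2 * Real.sqrt z)))) / (2 * Real.sqrt z)^2)) z :=
    (((hasDerivAt_const z (1:ℝ)).div h2s (by positivity)).const_mul l)
  rw [show (fun t => deriv ξ (l * Real.sqrt t) * (l * (1 / (2 * Real.sqrt t)))) =
      (fun t => deriv ξ (l * Real.sqrt t)) * (fun t => l * (1 / (2 * Real.sqrt t))) from rfl,
    (hF1.mul hF2).deriv]
  have hzz : Real.sqrt z ^ 2 = z := Real.sq_sqrt hz.le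
  set s := Real.sqrt z with hsdef
  rw [← hzz]
  field_simp
  ring

private lemma aux_alg (s l lam A B X : ℝ) (hs : 0 < s) (hl : 0 < l) :
    (A + ((5*(l*s)^4 + 9*l^2*(l*s)^2 + 3*l^4) / ((l*s) * ((l*s)^4 + 3*l^2*(l*s)^2 + 3*l^4))) * B
        = -(lam / (16*l^6)) * X / ((l*s)^4 + 3*l^2*(l*s)^2 + 3*l^4))
    ↔ (s^2 * ((s^2)^2 + 3*s^2 + 3) * (A * (l^2/(4*s^2)) - B * (l/(4*s^2*s))) +
        3*(s^2+1)^2 * (B * (l * (1/(2*s)))) = -(lam/(64*l^8)) * X) := by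
  have hP : (0:ℝ) < (l*s)^4 + 3*l^2*(l*s)^2 + 3*l^4 := by positivity
  have key : (s^2 * ((s^2)^2 + 3*s^2 + 3) * (A * (l^2/(4*s^2)) - B * (l/(4*s^2*s))) +
        3*(s^2+1)^2 * (B * (l * (1/(2*s)))) - (-(lam/(64*l^8)) * X))
      = (((l*s)^4 + 3*l^2*(l*s)^2 + 3*l^4)/(4*l^2)) *
        ((A + ((5*(l*s)^4 + 9*l^2*(l*s)^2 + 3*l^4) / ((l*s) * ((l*s)^4 + 3*l^2*(l*s)^2 + 3*l^4))) * B)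
          - (-(lam / (16*l^6)) * X / ((l*s)^4 + 3*l^2*(l*s)^2 + 3*l^4))) := by
    field_simp
    ring
  constructor
  · intro h
    have h0 : (A + ((5*(l*s)^4 + 9*l^2*(l*s)^2 + 3*l^4) / ((l*s) * ((l*s)^4 + 3*l^2*(l*s)^2 + 3*l^4))) * B)
          - (-(lam / (16*l^6)) * X / ((l*s)^4 + 3*l^2*(l*s)^2 + 3*l^4)) = 0 := by
      rw [sub_eq_zero]; exact h
    have := key
    rw [h0, mul_zero, sub_eq_zero] at this
    exact this
  · intro h
    have h0 : s^2 * ((s^2)^2 + 3*s^2 + 3) * (A * (l^2/(4*s^2)) - B * (l/(4*s^2*s))) +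
        3*(s^2+1)^2 * (B * (l * (1/(2*s)))) - (-(lam/(64*l^8)) * X) = 0 := by
      rw [sub_eq_zero]; exact h
    rw [h0] at key
    have hc : ((l*s)^4 + 3*l^2*(l*s)^2 + 3*l^4)/(4*l^2) ≠ 0 := by positivity
    have := (mul_eq_zero.1 key.symm).resolve_left hc
    rw [sub_eq_zero] at this
    exact this

/-- The substitution `r = l √z` maps the graviton eigenvalue equation for D3-branes on a
resolved cone over `T^{1,1}/ℤ₂` (with `l₁ = l₂ = l`) to the Sturm-Liouville problem
`z(z²+3z+3) η'' + 3(z+1)² η' = -(λ/(64 l⁸)) η` governing the resolved conifold over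
`S⁵/ℤ₃`. -/
theorem resolvedCone_T11_substitution
    (l lam : ℝ) (hl : 0 < l) (ξ : ℝ → ℝ) (hξ : ContDiffOn ℝ 2 ξ (Ioi 0)) :
    (∀ r > (0:ℝ),
        deriv (deriv ξ) r +
          ((5*r^4 + 9*l^2*r^2 + 3*l^4) / (r * (r^4 + 3*l^2*r^2 + 3*l^4))) * deriv ξ r
          = -(lam / (16*l^6)) * ξ r / (r^4 + 3*l^2*r^2 + 3*l^4)) ↔
      (∀ z > (0:ℝ),
        z * (z^2 + 3*z + 3) * deriv (deriv (fun t => ξ (l * Real.sqrt t))) z +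
          3 * (z+1)^2 * deriv (fun t => ξ (l * Real.sqrt t)) z
          = -(lam / (64*l^8)) * ξ (l * Real.sqrt z)) := by
  constructor
  · intro h z hz
    rw [aux_d2 l hl ξ hξ z hz, aux_d1 l hl ξ hξ z hz]
    have hs : 0 < Real.sqrt z := Real.sqrt_pos.2 hz
    have hzz : Real.sqrt z ^ 2 = z := Real.sq_sqrt hz.le
    have h1 := h (l * Real.sqrt z) (by positivity)
    set s := Real.sqrt z with hsdef
    rw [← hzz]
    exact (aux_alg s l lam (deriv (deriv ξ) (l*s)) (deriv ξ (l*s)) (ξ (l*s)) hs hl).1 h1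
  · intro h r hr
    have hs : 0 < r / l := by positivity
    have hz : 0 < (r/l)^2 := by positivity
    have h1 := h ((r/l)^2) hz
    rw [aux_d2 l hl ξ hξ _ hz, aux_d1 l hl ξ hξ _ hz,
      Real.sqrt_sq hs.le] at h1
    have h2 := (aux_alg (r/l) l lam (deriv (deriv ξ) (l*(r/l))) (deriv ξ (l*(r/l)))
      (ξ (l*(r/l))) hs hl).2 h1
    rw [show l * (r/l) = r by field_simp] at h2
    exact h2
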